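/- arXiv:2008.09493 — 2 statements merged into one kernel-verified Lean document; each statement's English description precedes it below -/
import Mathlib

section
/- Let T be a totally ordered set and I ⊆ T an interval. Define rad(I) = I ∩ overline(I), where overline(I) = {t ∈ T : I ∩ {s : s < t} is nonempty and cofinal in {s : s < t}}. Then if rad(I) is nonempty, it is an interval in T. -/
/-- `I` is an interval in a totally ordered set: if `s ≤ t ≤ u` with `s, u ∈ I`, then `t ∈ I`. -/
def IsInterval {T : Type*} [LinearOrder T] (I : Set T) : Prop :=
  ∀ ⦃s t u : T⦄, s ≤ t → t ≤ u → s ∈ I → u ∈ I → t ∈ I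

/-- `overline I`: the set of `t` such that `I ∩ {s | s < t}` is nonempty and cofinal
in `{s | s < t}`. -/
def overlineSet {T : Type*} [LinearOrder T] (I : Set T) : Set T :=
  {t | (I ∩ Set.Iio t).Nonempty ∧ ∀ s ∈ Set.Iio t, ∃ u ∈ I ∩ Set.Iio t, s ≤ u}

/-- `rad I = I ∩ overline I`. -/
def radSet {T : Type*} [LinearOrder T] (I : Set T) : Set T :=
  I ∩ overlineSet I

theorem radSet_isInterval {T : Type*} [LinearOrder T] (I : Set T)
    (hI : IsInterval I) (hne : (radSet I).Nonempty) :
    IsInterval (radSet I) := by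
  rintro s t u hst htu ⟨hsI, ⟨x, hxI, hxs⟩, hscof⟩ ⟨huI, _, hucof⟩
  refine ⟨hI hst htu hsI huI, ⟨x, hxI, lt_of_lt_of_le hxs hst⟩, ?_⟩
  intro v hvt
  rcases lt_or_ge v s with hvs | hsv
  · obtain ⟨w, ⟨hwI, hws⟩, hvw⟩ := hscof v hvs
    exact ⟨w, ⟨hwI, lt_of_lt_of_le hws hst⟩, hvw⟩
  · obtain ⟨w, ⟨hwI, _⟩, hvw⟩ := hucof v (lt_of_lt_of_le hvt htu)
    exact ⟨v, ⟨hI hsv hvw hsI hwI, hvt⟩, le_refl v⟩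
end

section
/- Let T be a totally ordered set, 𝔽 a field, and I ⊆ T an interval. Then overline(C(I)), defined pointwise by overline(C(I))_t = colim_{s < t} C(I)_s (direct limit, with the colimit over an empty index set being 0), is isomorphic to the interval module C(overline(I)), where overline(I) = {t : I ∩ (−∞,t) is nonempty and cofinal in (−∞,t)} (and C(∅) = 0). -/
open CategoryTheory CategoryTheory.Limits

set_option maxHeartbeats 1000000
set_option synthInstance.maxHeartbeats 200000

/-- A persistence module over a totally ordered set `T`: a functor from `T` (viewed as a
category via its order) to the category of `F`-vector spaces. -/
abbrev PersistenceModule (F : Type) [Field F] (T : Type) [LinearOrder T] :=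
  T ⥤ ModuleCat.{0} F

variable (F : Type) [Field F] (T : Type) [LinearOrder T]

/-- The inclusion functor of the strict up-set of `t` into `T`. -/
def upFunctor (t : T) : {s : T // t < s} ⥤ T :=
  Monotone.functor (f := (Subtype.val : {s : T // t < s} → T)) (fun _ _ h => h)

/-- The inclusion functor of the strict down-set of `t` into `T`. -/
def downFunctor (t : T) : {s : T // s < t} ⥤ T :=
  Monotone.functor (f := (Subtype.val : {s : T // s < t} → T)) (fun _ _ h => h)

/-- `underline M`, with `(underline M)_t = lim_{s > t} M_s` (the limit over the empty
category being `0`). -/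
noncomputable def underlinePM (M : PersistenceModule F T) : PersistenceModule F T where
  obj t := limit (upFunctor T t ⋙ M)
  map {s t} f := limit.lift (upFunctor T t ⋙ M)
    { pt := limit (upFunctor T s ⋙ M)
      π :=
        { app := fun u => limit.π (upFunctor T s ⋙ M) ⟨u.1, lt_of_le_of_lt (leOfHom f) u.2⟩
          naturality := fun u v g => by
            dsimp
            refine Eq.trans (Category.id_comp _) ?_
            exact (limit.w (upFunctor T s ⋙ M) (homOfLE (leOfHom g))).symm } }
  map_id t := by
    apply limit.hom_ext
    intro u
    simp
  map_comp {s t u} f g := by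
    apply limit.hom_ext
    intro v
    simp
    refine Eq.symm ((limit.lift_π _ _).trans ?_)
    rfl

/-- `overline M`, with `(overline M)_t = colim_{s < t} M_s` (the colimit over the empty
category being `0`). -/
noncomputable def overlinePM (M : PersistenceModule F T) : PersistenceModule F T where
  obj t := colimit (downFunctor T t ⋙ M)
  map {s t} f := colimit.desc (downFunctor T s ⋙ M)
    { pt := colimit (downFunctor T t ⋙ M)
      ι :=
        { app := fun u => colimit.ι (downFunctor T t ⋙ M) ⟨u.1, lt_of_lt_of_le u.2 (leOfHom f)⟩
          naturality := fun u v g => by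
            dsimp
            refine Eq.trans ?_ (Category.comp_id _).symm
            have h : (⟨u.1, lt_of_lt_of_le u.2 (leOfHom f)⟩ : {x : T // x < t}) ⟶
                ⟨v.1, lt_of_lt_of_le v.2 (leOfHom f)⟩ := homOfLE (leOfHom g)
            exact colimit.w (downFunctor T t ⋙ M) h } }
  map_id t := by
    apply colimit.hom_ext
    intro u
    simp
  map_comp {s t u} f g := by
    apply colimit.hom_ext
    intro v
    simp
    refine Eq.symm ((colimit.ι_desc _ _).trans ?_)
    rfl

/-- The canonical morphism `M ⟶ underline M` given by the universal property of the limits. -/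
noncomputable def toUnderline (M : PersistenceModule F T) : M ⟶ underlinePM F T M where
  app t := limit.lift (upFunctor T t ⋙ M)
    { pt := M.obj t
      π :=
        { app := fun u => M.map (homOfLE u.2.le)
          naturality := fun u v g => by
            dsimp
            rw [Category.id_comp, ← M.map_comp]
            rfl } }
  naturality s t f := by
    apply limit.hom_ext
    intro u
    simp only [underlinePM, Category.assoc, limit.lift_π, ← M.map_comp]
    refine Eq.symm ((limit.lift_π _ _).trans ?_)
    rfl

/-- The canonical morphism `overline M ⟶ M` given by the universal property of the colimits. -/
noncomputable def fromOverline (M : PersistenceModule F T) : overlinePM F T M ⟶ M where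
  app t := colimit.desc (downFunctor T t ⋙ M)
    { pt := M.obj t
      ι :=
        { app := fun u => M.map (homOfLE u.2.le)
          naturality := fun u v g => by
            dsimp
            rw [Category.comp_id, ← M.map_comp]
            rfl } }
  naturality s t f := by
    apply colimit.hom_ext
    intro u
    simp only [overlinePM, colimit.ι_desc_assoc, colimit.ι_desc, ← M.map_comp]
    exact colimit.ι_desc _ _

/-- `M` is upper semi-continuous if the canonical map `M_t → lim_{s > t} M_s` is an
isomorphism for all `t`. -/
noncomputable def IsUSC (M : PersistenceModule F T) : Prop :=
  ∀ t : T, IsIso ((toUnderline F T M).app t)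

/-- `M` is lower semi-continuous if the canonical map `colim_{s < t} M_s → M_t` is an
isomorphism for all `t`. -/
noncomputable def IsLSC (M : PersistenceModule F T) : Prop :=
  ∀ t : T, IsIso ((fromOverline F T M).app t)

/-- `M` is ephemeral if all structure maps `M_{s,t}` with `s < t` vanish. -/
def Ephemeral (M : PersistenceModule F T) : Prop :=
  ∀ s t : T, ∀ h : s < t, M.map (homOfLE h.le) = 0

/-- `M` is q-tame if all structure maps `M_{s,t}` with `s < t` have finite rank. -/
def QTame (M : PersistenceModule F T) : Prop :=
  ∀ s t : T, ∀ h : s < t, Module.Finite F (LinearMap.range (M.map (homOfLE h.le)).hom)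

/-- A morphism of persistence modules is a weak isomorphism if its kernel and cokernel
are ephemeral. -/
noncomputable def IsWeakIso {M N : PersistenceModule F T} (φ : M ⟶ N) : Prop :=
  Ephemeral F T (kernel φ) ∧ Ephemeral F T (cokernel φ)

open Classical

/-- The interval module `C(I)`: the field `F` at points of `I` with identity structure
maps inside `I`, and `0` elsewhere (in particular `C(∅) = 0`). -/
noncomputable def intervalModule (I : Set T) : PersistenceModule F T where
  obj t := ModuleCat.of F (↥(if t ∈ I then (⊤ : Submodule F F) else (⊥ : Submodule F F)))
  map {s t} f :=
    if h : Set.Icc s t ⊆ I then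
      ModuleCat.ofHom (Submodule.inclusion (by
        rw [if_pos (h (Set.right_mem_Icc.mpr (leOfHom f)))]
        exact le_top))
    else 0
  map_id t := by
    try dsimp only
    by_cases ht : t ∈ I
    · rw [dif_pos (by simpa using ht)]
      rfl
    · have h : ¬ Set.Icc t t ⊆ I := by simpa using ht
      rw [dif_neg h]
      have hs : Subsingleton (↥(if t ∈ I then (⊤ : Submodule F F) else (⊥ : Submodule F F))) := by
        rw [if_neg ht]
        infer_instance
      apply ModuleCat.hom_ext
      apply LinearMap.ext
      intro x
      exact @Subsingleton.elim _ hs _ _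
  map_comp {s t u} f g := by
    try dsimp only
    by_cases h : Set.Icc s u ⊆ I
    · have h1 : Set.Icc s t ⊆ I :=
        fun x hx => h ⟨hx.1, le_trans hx.2 (leOfHom g)⟩
      have h2 : Set.Icc t u ⊆ I :=
        fun x hx => h ⟨le_trans (leOfHom f) hx.1, hx.2⟩
      rw [dif_pos h, dif_pos h1, dif_pos h2]
      rfl
    · rw [dif_neg h]
      by_cases h1 : Set.Icc s t ⊆ I
      · have h2 : ¬ Set.Icc t u ⊆ I := fun h2 => h (by
          intro x hx
          rcases le_total x t with hxt | htx
          · exact h1 ⟨hx.1, hxt⟩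
          · exact h2 ⟨htx, hx.2⟩)
        rw [dif_pos h1, dif_neg h2, Limits.comp_zero]
      · rw [dif_neg h1, Limits.zero_comp]

/-- Functoriality of `overline` on morphisms. -/
noncomputable def overlineMap {M N : PersistenceModule F T} (φ : M ⟶ N) :
    overlinePM F T M ⟶ overlinePM F T N where
  app t := colimMap (Functor.whiskerLeft (downFunctor T t) φ)
  naturality s t f := by
    apply colimit.hom_ext
    intro u
    simp [overlinePM]
    exact ι_colimMap (Functor.whiskerLeft (downFunctor T t) φ) _

/-- Functoriality of `underline` on morphisms. -/
noncomputable def underlineMap {M N : PersistenceModule F T} (φ : M ⟶ N) :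
    underlinePM F T M ⟶ underlinePM F T N where
  app t := limMap (Functor.whiskerLeft (upFunctor T t) φ)
  naturality s t f := by
    apply limit.hom_ext
    intro u
    simp [underlinePM]
    exact (limMap_π (Functor.whiskerLeft (upFunctor T s) φ) _).symm

/-- The radical of a persistence module: the image of the canonical morphism
`overline M ⟶ M`. -/
noncomputable def radPM (M : PersistenceModule F T) : PersistenceModule F T :=
  image (fromOverline F T M)

/-- The canonical morphism from the direct sum to the product of a collection of
persistence modules. -/
noncomputable def sumToProd {A : Type} (M : A → PersistenceModule F T) :
    (∐ M) ⟶ (∏ᶜ M) :=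
  Sigma.desc fun a => Pi.lift fun b =>
    if h : a = b then eqToHom (congrArg M h) else 0

/-- The pointwise dual persistence module `M*`, indexed by the opposite order. -/
noncomputable def dualPM (M : PersistenceModule F T) : PersistenceModule F Tᵒᵈ where
  obj t := ModuleCat.of F (Module.Dual F (M.obj (OrderDual.ofDual t)))
  map {s t} f :=
    ModuleCat.ofHom (M.map (homOfLE (leOfHom f : OrderDual.ofDual t ≤ OrderDual.ofDual s))).hom.dualMap
  map_id t := by
    try dsimp only
    rw [show (homOfLE _ : OrderDual.ofDual t ⟶ OrderDual.ofDual t) = 𝟙 _ from rfl,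
      M.map_id]
    rfl
  map_comp {s t u} f g := by
    try dsimp only
    rw [show (homOfLE _ : OrderDual.ofDual u ⟶ OrderDual.ofDual s) =
        (homOfLE (leOfHom g : OrderDual.ofDual u ≤ OrderDual.ofDual t)) ≫
        (homOfLE (leOfHom f : OrderDual.ofDual t ≤ OrderDual.ofDual s)) from rfl,
      M.map_comp]
    rfl

/-- `underline I`: the set of `t` such that `I ∩ {s | t < s}` is nonempty and coinitial
in `{s | t < s}`. -/
def underlineSet {T : Type*} [LinearOrder T] (I : Set T) : Set T :=
  {t | (I ∩ Set.Ioi t).Nonempty ∧ ∀ s ∈ Set.Ioi t, ∃ u ∈ I ∩ Set.Ioi t, u ≤ s}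

/-
For `t ∈ overlineSet I` pick `u ∈ I` below `t`; as `I` is an interval, `[u, t) ⊆ I`, so the
diagram `s ↦ C(I)_s` over `s < t` is eventually constant `𝔽` with identity maps and its colimit
is `𝔽`. For `t ∉ overlineSet I`, every `s ∈ I` below `t` is followed by some `w < t` outside `I`,
so every leg of a cocone factors through `C(I)_w = 0` and the colimit is `0`. Hence the
inclusions `C(I)_s → C(overlineSet I)_t` form a colimit cocone, naturally in `t`.
-/

lemma mem_overlineSet_of_Ico_subset {T : Type*} [LinearOrder T] {I : Set T} {u t : T}
    (hut : u < t) (h : Set.Ico u t ⊆ I) : t ∈ overlineSet I := by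
  refine ⟨⟨u, h ⟨le_rfl, hut⟩, hut⟩, fun v hv => ?_⟩
  rcases le_total u v with huv | hvu
  · exact ⟨v, ⟨h ⟨huv, hv⟩, hv⟩, le_rfl⟩
  · exact ⟨u, ⟨h ⟨le_rfl, hut⟩, hut⟩, hvu⟩

lemma IsInterval.Icc_subset {T : Type*} [LinearOrder T] {I : Set T} (hI : IsInterval I)
    {a b : T} (ha : a ∈ I) (hb : b ∈ I) : Set.Icc a b ⊆ I :=
  fun _ hw => hI hw.1 hw.2 ha hb

lemma IsInterval.Ico_subset_of_mem_overlineSet {T : Type*} [LinearOrder T] {I : Set T}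
    (hI : IsInterval I) {u t : T} (hu : u ∈ I) (ht : t ∈ overlineSet I) :
    Set.Ico u t ⊆ I := by
  intro w hw
  obtain ⟨v, ⟨hvI, -⟩, hwv⟩ := ht.2 w hw.2
  exact hI hw.1 hwv hu hvI

lemma IsInterval.Ioc_subset_overlineSet {T : Type*} [LinearOrder T] {I : Set T}
    (hI : IsInterval I) {u t : T} (hu : u ∈ I) (ht : t ∈ overlineSet I) :
    Set.Ioc u t ⊆ overlineSet I := fun _ hw =>
  mem_overlineSet_of_Ico_subset hw.1 fun _ hv =>
    hI.Ico_subset_of_mem_overlineSet hu ht ⟨hv.1, hv.2.trans_le hw.2⟩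

section IntervalModule

variable {F T}

lemma isZero_intervalModule_obj {I : Set T} {t : T} (ht : t ∉ I) :
    IsZero ((intervalModule F T I).obj t) := by
  have : Subsingleton ((intervalModule F T I).obj t) := by
    change Subsingleton ↥(if t ∈ I then (⊤ : Submodule F F) else ⊥)
    rw [if_neg ht]
    infer_instance
  exact ModuleCat.isZero_of_subsingleton _

lemma intervalModule_hom_ext {I J : Set T} {a b : T}
    {f g : (intervalModule F T I).obj a ⟶ (intervalModule F T J).obj b}
    (h : a ∈ I → b ∈ J → ∀ x, (f.hom x).1 = (g.hom x).1) : f = g := by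
  by_cases ha : a ∈ I
  · by_cases hb : b ∈ J
    · exact ModuleCat.hom_ext (LinearMap.ext fun x => Subtype.ext (h ha hb x))
    · exact (isZero_intervalModule_obj hb).eq_of_tgt f g
  · exact (isZero_intervalModule_obj ha).eq_of_src f g

noncomputable def intervalInclusion {I J : Set T} {a b : T} (h : a ∈ I → b ∈ J) :
    (intervalModule F T I).obj a ⟶ (intervalModule F T J).obj b :=
  ModuleCat.ofHom (Submodule.inclusion (by
    split_ifs with ha hb hb
    exacts [le_rfl, absurd (h ha) hb, bot_le, bot_le]))

lemma intervalModule_map_of_Icc_subset {I : Set T} {a b : T} (f : a ⟶ b)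
    (h : Set.Icc a b ⊆ I) :
    (intervalModule F T I).map f = intervalInclusion fun _ => h ⟨leOfHom f, le_rfl⟩ :=
  dif_pos h

lemma intervalModule_map_of_not_Icc_subset {I : Set T} {a b : T} (f : a ⟶ b)
    (h : ¬ Set.Icc a b ⊆ I) : (intervalModule F T I).map f = 0 :=
  dif_neg h

lemma intervalModule_map_apply_coe {I : Set T} {a b : T} (f : a ⟶ b)
    (x : (intervalModule F T I).obj a) :
    (((intervalModule F T I).map f).hom x).1 = if Set.Icc a b ⊆ I then x.1 else 0 := by
  by_cases h : Set.Icc a b ⊆ I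
  · rw [if_pos h, intervalModule_map_of_Icc_subset f h]; rfl
  · rw [if_neg h, intervalModule_map_of_not_Icc_subset f h]; rfl

end IntervalModule

section Overline

variable {F T}

noncomputable def overlineι (M : PersistenceModule F T) {t : T} (j : {s : T // s < t}) :
    M.obj j.1 ⟶ (overlinePM F T M).obj t :=
  colimit.ι (downFunctor T t ⋙ M) j

lemma overlinePM_obj_hom_ext (M : PersistenceModule F T) {t : T} {X : ModuleCat F}
    {f g : (overlinePM F T M).obj t ⟶ X} (h : ∀ j, overlineι M j ≫ f = overlineι M j ≫ g) :
    f = g :=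
  colimit.hom_ext h

lemma overlineι_comp_overlinePM_map (M : PersistenceModule F T) {s t : T} (f : s ⟶ t)
    (u : {x : T // x < s}) :
    overlineι M u ≫ (overlinePM F T M).map f = overlineι M ⟨u.1, u.2.trans_le (leOfHom f)⟩ :=
  colimit.ι_desc _ _

noncomputable def overlineSetInclusion (I : Set T) (s t : T) :
    (intervalModule F T I).obj s ⟶ (intervalModule F T (overlineSet I)).obj t :=
  if ht : t ∈ overlineSet I then intervalInclusion fun _ => ht else 0

variable {I : Set T}

lemma overlineSetInclusion_of_mem {s t : T} (ht : t ∈ overlineSet I) :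
    overlineSetInclusion (F := F) I s t = intervalInclusion fun _ => ht :=
  dif_pos ht

lemma overlineSetInclusion_of_not_mem {s t : T} (ht : t ∉ overlineSet I) :
    overlineSetInclusion (F := F) I s t = 0 :=
  dif_neg ht

lemma overlineSetInclusion_apply_coe {s t : T} (x : (intervalModule F T I).obj s) :
    ((overlineSetInclusion I s t).hom x).1 = if t ∈ overlineSet I then x.1 else 0 := by
  by_cases ht : t ∈ overlineSet I
  · rw [overlineSetInclusion_of_mem ht]
    exact (if_pos ht).symm
  · rw [overlineSetInclusion_of_not_mem ht]
    exact (if_neg ht).symm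

lemma intervalModule_map_comp_overlineSetInclusion (hI : IsInterval I) {a b t : T} (f : a ⟶ b)
    (hbt : b < t) :
    (intervalModule F T I).map f ≫ overlineSetInclusion I b t = overlineSetInclusion I a t :=
  intervalModule_hom_ext fun ha ht x => by
    have hab : Set.Icc a b ⊆ I := fun _ hw =>
      hI.Ico_subset_of_mem_overlineSet ha ht ⟨hw.1, hw.2.trans_lt hbt⟩
    simp [overlineSetInclusion_apply_coe, intervalModule_map_apply_coe, hab, ht]

lemma overlineSetInclusion_comp_intervalModule_map (hI : IsInterval I) {u s t : T} (f : s ⟶ t)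
    (hus : u < s) :
    overlineSetInclusion I u s ≫ (intervalModule F T (overlineSet I)).map f =
      overlineSetInclusion I u t :=
  intervalModule_hom_ext fun hu ht x => by
    have hst : Set.Icc s t ⊆ overlineSet I := fun _ hw =>
      hI.Ioc_subset_overlineSet hu ht ⟨hus.trans_le hw.1, hw.2⟩
    have hs : s ∈ overlineSet I := hst ⟨le_rfl, leOfHom f⟩
    simp [overlineSetInclusion_apply_coe, intervalModule_map_apply_coe, hst, hs, ht]

noncomputable def overlineCocone (hI : IsInterval I) (t : T) :
    Cocone (downFunctor T t ⋙ intervalModule F T I) where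
  pt := (intervalModule F T (overlineSet I)).obj t
  ι :=
    { app j := overlineSetInclusion I j.1 t
      naturality _ k g :=
        (intervalModule_map_comp_overlineSetInclusion hI ((downFunctor T t).map g) k.2).trans
          (Category.comp_id _).symm }

lemma overlineCocone_ι_app (hI : IsInterval I) {t : T} (j : {s : T // s < t}) :
    (overlineCocone (F := F) hI t).ι.app j = overlineSetInclusion I j.1 t :=
  rfl

lemma intervalModule_cocone_ι_app_eq_comp {t : T}
    (c : Cocone (downFunctor T t ⋙ intervalModule F T I)) {j k : {s : T // s < t}} (hjk : j ≤ k)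
    (h : Set.Icc j.1 k.1 ⊆ I) :
    c.ι.app j = intervalInclusion (fun _ => h ⟨hjk, le_rfl⟩) ≫ c.ι.app k := by
  rw [← c.w (homOfLE hjk), Functor.comp_map,
    intervalModule_map_of_Icc_subset ((downFunctor T t).map (homOfLE hjk)) h]
  rfl

lemma intervalModule_cocone_ι_app_eq_zero {t : T}
    (c : Cocone (downFunctor T t ⋙ intervalModule F T I)) (ht : t ∉ overlineSet I)
    (j : {s : T // s < t}) : c.ι.app j = 0 := by
  by_cases hj : j.1 ∈ I
  · obtain ⟨w, hw, hwI⟩ := Set.not_subset.mp fun h => ht (mem_overlineSet_of_Ico_subset j.2 h)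
    let g : j ⟶ ⟨w, hw.2⟩ := homOfLE hw.1
    rw [← c.w g, Functor.comp_map, intervalModule_map_of_not_Icc_subset ((downFunctor T t).map g)
      fun h => hwI (h ⟨hw.1, le_rfl⟩), zero_comp]
  · exact (isZero_intervalModule_obj hj).eq_of_src _ _

noncomputable def overlineCoconeIsColimit (hI : IsInterval I) (t : T) :
    IsColimit (overlineCocone (F := F) hI t) := by
  refine IsColimit.ofExistsUnique fun c => ?_
  by_cases ht : t ∈ overlineSet I
  · obtain ⟨u, huI, hut⟩ := ht.1
    refine ⟨intervalInclusion (fun _ => huI) ≫ c.ι.app ⟨u, hut⟩, fun j => ?_, fun m hm => ?_⟩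
    · by_cases hj : j.1 ∈ I
      · let v : {s : T // s < t} := ⟨max j.1 u, max_lt j.2 hut⟩
        have hvI : v.1 ∈ I := max_rec' _ hj huI
        rw [intervalModule_cocone_ι_app_eq_comp c (k := v) le_sup_left (hI.Icc_subset hj hvI),
          intervalModule_cocone_ι_app_eq_comp c (j := ⟨u, hut⟩) (k := v) le_sup_right
            (hI.Icc_subset huI hvI), overlineCocone_ι_app, overlineSetInclusion_of_mem ht]
        -- a composite of `intervalInclusion`s is definitionally an `intervalInclusion`
        rfl
      · exact (isZero_intervalModule_obj hj).eq_of_src _ _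
    · rw [← hm, overlineCocone_ι_app, overlineSetInclusion_of_mem ht]
      exact (Category.id_comp m).symm
  · refine ⟨0, fun j => ?_, fun m _ => (isZero_intervalModule_obj ht).eq_of_src _ _⟩
    rw [comp_zero, intervalModule_cocone_ι_app_eq_zero c ht]

noncomputable def overlineIntervalModuleObjIso (hI : IsInterval I) (t : T) :
    (overlinePM F T (intervalModule F T I)).obj t ≅ (intervalModule F T (overlineSet I)).obj t :=
  colimit.isoColimitCocone ⟨overlineCocone hI t, overlineCoconeIsColimit hI t⟩

lemma overlineι_comp_overlineIntervalModuleObjIso_hom (hI : IsInterval I) {t : T}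
    (j : {s : T // s < t}) :
    overlineι (intervalModule F T I) j ≫ (overlineIntervalModuleObjIso hI t).hom =
      overlineSetInclusion I j.1 t :=
  colimit.isoColimitCocone_ι_hom _ _

end Overline

/-- `overline(C(I))` is isomorphic to `C(overline I)` (as persistence modules). -/
theorem overline_intervalModule_iso (I : Set T) (hI : IsInterval I) :
    Nonempty (overlinePM F T (intervalModule F T I) ≅ intervalModule F T (overlineSet I)) := by
  refine ⟨NatIso.ofComponents (overlineIntervalModuleObjIso hI)
    (fun {s t} f => overlinePM_obj_hom_ext _ fun u => ?_)⟩
  rw [← Category.assoc, overlineι_comp_overlinePM_map,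
    overlineι_comp_overlineIntervalModuleObjIso_hom, ← Category.assoc,
    overlineι_comp_overlineIntervalModuleObjIso_hom]
  exact (overlineSetInclusion_comp_intervalModule_map hI f u.2).symm
end
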